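/- arXiv:1004.2385 — 2 statements merged into one kernel-verified Lean document; each statement's English description precedes it below -/
import Mathlib

section
/- Violation of conditional regularity for the discrete alloy-type model: Let d = 1 and let the single-site potential be u(0) = 1, u(−1) = a with a > 0 and u(k) = 0 for k ∉ {−1, 0}. Let (ω_k)_{k∈ℤ} be i.i.d. real random variables whose common distribution has a density ρ of bounded support whose support has infimum 0 (so that ω_k ≥ 0 almost surely). Set V_ω(x) = ω_x + a ω_{x+1}, and for ε > 0 define the events B_ε = { V_ω(−1) ∈ [0,ε] and V_ω(1) ∈ [0,ε] } and A_ε = { V_ω(0) ∈ [0, ε(a + 1/a)] }. Then B_ε ⊆ A_ε up to a null set, and consequently, for every ε > 0 with P(B_ε) > 0, the conditional probability satisfies P(A_ε | B_ε) = 1. -/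
open MeasureTheory ProbabilityTheory
open scoped ENNReal

/-!
Since `ρ` vanishes below `inf supp ρ = 0`, almost surely every `ω_k` is nonnegative. On that
event, `V(-1) ≤ ε` forces `a ω_0 ≤ ε` and `V(1) ≤ ε` forces `ω_1 ≤ ε`, hence
`V(0) = ω_0 + a ω_1 ≤ ε / a + a ε`: the event `B_ε` determines `A_ε` almost surely.
-/

theorem Function.apply_eq_zero_of_lt_csInf_support {α M : Type*}
    [ConditionallyCompleteLinearOrder α] [Zero M] {f : α → M} {t : α}
    (hf : BddBelow (Function.support f)) (ht : t < sInf (Function.support f)) : f t = 0 :=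
  Function.notMem_support.1 fun h => (csInf_le hf h).not_gt ht

theorem ae_le_of_map_eq_withDensity {Ω : Type*} [MeasurableSpace Ω] {P : Measure Ω}
    {X : Ω → ℝ} {f : ℝ → ℝ≥0∞} {c : ℝ} (hX : Measurable X)
    (hmap : P.map X = volume.withDensity f) (hf : ∀ t < c, f t = 0) :
    ∀ᵐ x ∂P, c ≤ X x := by
  refine (ae_map_iff hX.aemeasurable measurableSet_Ici).1 ?_
  rw [hmap, ae_iff]
  simp only [not_le]
  change volume.withDensity f (Set.Iio c) = 0
  rw [withDensity_apply _ measurableSet_Iio]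
  exact setLIntegral_eq_zero measurableSet_Iio hf

theorem ProbabilityTheory.cond_eq_one_of_measure_diff_eq_zero {Ω : Type*} [MeasurableSpace Ω]
    {μ : Measure Ω} {s t : Set Ω} (hs : MeasurableSet s) (hs₀ : μ s ≠ 0) (hs_top : μ s ≠ ∞)
    (hst : μ (s \ t) = 0) : μ[t | s] = 1 := by
  rw [cond_apply hs, measure_inter_conull' hst, ENNReal.inv_mul_cancel hs₀ hs_top]

theorem add_mul_mem_Icc_of_neighbours_le {a ε p q r s : ℝ} (ha : 0 < a)
    (hp : 0 ≤ p) (hq : 0 ≤ q) (hr : 0 ≤ r) (hs : 0 ≤ s)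
    (hleft : p + a * q ≤ ε) (hright : r + a * s ≤ ε) :
    q + a * r ∈ Set.Icc 0 (ε * (a + 1 / a)) := by
  refine ⟨by positivity, ?_⟩
  have hq_le : q ≤ ε / a := (le_div_iff₀ ha).2 (by linarith)
  have hr_le : a * r ≤ a * ε := mul_le_mul_of_nonneg_left (by linarith [mul_nonneg ha.le hs]) ha.le
  calc q + a * r ≤ ε / a + a * ε := add_le_add hq_le hr_le
    _ = ε * (a + 1 / a) := by ring

theorem conditional_regularity_violated_general
    (a : ℝ) (ha : 0 < a)
    (Ω : Type*) [MeasurableSpace Ω] (P : Measure Ω) [IsProbabilityMeasure P]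
    (ω : ℤ → Ω → ℝ) (ρ : ℝ → ℝ)
    (hmeas : ∀ k, Measurable (ω k))
    (hdist : ∀ k, P.map (ω k) = volume.withDensity fun t => ENNReal.ofReal (ρ t))
    (hρ_bddsupp : Bornology.IsBounded (Function.support ρ))
    (hρ_inf : sInf (Function.support ρ) = 0)
    (ε : ℝ) :
    P ({wp | ω (-1) wp + a * ω 0 wp ∈ Set.Icc (0 : ℝ) ε ∧
             ω 1 wp + a * ω 2 wp ∈ Set.Icc (0 : ℝ) ε} \
       {wp | ω 0 wp + a * ω 1 wp ∈ Set.Icc (0 : ℝ) (ε * (a + 1 / a))}) = 0 ∧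
    (P {wp | ω (-1) wp + a * ω 0 wp ∈ Set.Icc (0 : ℝ) ε ∧
             ω 1 wp + a * ω 2 wp ∈ Set.Icc (0 : ℝ) ε} ≠ 0 →
      ProbabilityTheory.cond P
          {wp | ω (-1) wp + a * ω 0 wp ∈ Set.Icc (0 : ℝ) ε ∧
                ω 1 wp + a * ω 2 wp ∈ Set.Icc (0 : ℝ) ε}
          {wp | ω 0 wp + a * ω 1 wp ∈ Set.Icc (0 : ℝ) (ε * (a + 1 / a))} = 1) := by
  set B := {wp | ω (-1) wp + a * ω 0 wp ∈ Set.Icc (0 : ℝ) ε ∧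
    ω 1 wp + a * ω 2 wp ∈ Set.Icc (0 : ℝ) ε}
  set A := {wp | ω 0 wp + a * ω 1 wp ∈ Set.Icc (0 : ℝ) (ε * (a + 1 / a))}
  have hdensity : ∀ t < 0, ENNReal.ofReal (ρ t) = 0 := fun t ht => by
    rw [Function.apply_eq_zero_of_lt_csInf_support hρ_bddsupp.bddBelow (hρ_inf ▸ ht),
      ENNReal.ofReal_zero]
  have hnonneg : ∀ᵐ wp ∂P, ∀ k, 0 ≤ ω k wp :=
    ae_all_iff.2 fun k => ae_le_of_map_eq_withDensity (hmeas k) (hdist k) hdensity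
  have hdiff : P (B \ A) = 0 := measure_eq_zero_iff_ae_notMem.2 <| by
    filter_upwards [hnonneg] with wp hwp ⟨⟨hl, hr⟩, hA⟩
    exact hA (add_mul_mem_Icc_of_neighbours_le ha (hwp _) (hwp _) (hwp _) (hwp _) hl.2 hr.2)
  have hB : MeasurableSet B :=
    (((hmeas _).add ((hmeas _).const_mul a)) measurableSet_Icc).inter
      (((hmeas _).add ((hmeas _).const_mul a)) measurableSet_Icc)
  exact ⟨hdiff, fun hB₀ => cond_eq_one_of_measure_diff_eq_zero hB hB₀ (measure_ne_top P B) hdiff⟩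

/-- **Violation of conditional regularity for the discrete alloy-type model**
(Section 3 of "Spectral properties of discrete alloy-type models").
In dimension one, with single-site potential `u(0) = 1`, `u(-1) = a > 0` (so that
`V_ω(x) = ω_x + a ω_{x+1}`) and i.i.d. coupling constants whose density `ρ` has bounded
support with infimum `0`, the event
`B_ε = {V_ω(-1) ∈ [0,ε] ∧ V_ω(1) ∈ [0,ε]}` is, up to a null set, contained in
`A_ε = {V_ω(0) ∈ [0, ε(a + 1/a)]}`; consequently `ℙ(A_ε | B_ε) = 1` whenever
`ℙ(B_ε) > 0`. -/
theorem conditional_regularity_violated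
    (a : ℝ) (ha : 0 < a)
    (Ω : Type*) [MeasurableSpace Ω] (P : Measure Ω) [IsProbabilityMeasure P]
    (ω : ℤ → Ω → ℝ) (ρ : ℝ → ℝ)
    (hmeas : ∀ k, Measurable (ω k))
    (hindep : iIndepFun ω P)
    (hdist : ∀ k, P.map (ω k) = volume.withDensity fun t => ENNReal.ofReal (ρ t))
    (hρ_nonneg : ∀ t, 0 ≤ ρ t)
    (hρ_bddsupp : Bornology.IsBounded (Function.support ρ))
    (hρ_ne : (Function.support ρ).Nonempty)
    (hρ_inf : sInf (Function.support ρ) = 0)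
    (ε : ℝ) (hε : 0 < ε) :
    P ({wp | ω (-1) wp + a * ω 0 wp ∈ Set.Icc (0 : ℝ) ε ∧
             ω 1 wp + a * ω 2 wp ∈ Set.Icc (0 : ℝ) ε} \
       {wp | ω 0 wp + a * ω 1 wp ∈ Set.Icc (0 : ℝ) (ε * (a + 1 / a))}) = 0 ∧
    (P {wp | ω (-1) wp + a * ω 0 wp ∈ Set.Icc (0 : ℝ) ε ∧
             ω 1 wp + a * ω 2 wp ∈ Set.Icc (0 : ℝ) ε} ≠ 0 →
      ProbabilityTheory.cond P
          {wp | ω (-1) wp + a * ω 0 wp ∈ Set.Icc (0 : ℝ) ε ∧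
                ω 1 wp + a * ω 2 wp ∈ Set.Icc (0 : ℝ) ε}
          {wp | ω 0 wp + a * ω 1 wp ∈ Set.Icc (0 : ℝ) (ε * (a + 1 / a))} = 1) :=
  conditional_regularity_violated_general a ha Ω P ω ρ hmeas hdist hρ_bddsupp hρ_inf ε
end

section
/- Weighted integral bound for W^{1,1} densities: Let g : ℝ → [0,∞) be integrable and absolutely continuous with integrable derivative g' (i.e. g(b) − g(a) = ∫_a^b g'(t) dt for all a ≤ b and ∫_ℝ |g'| < ∞), let s ∈ (0,1), δ ∈ ℂ and λ > 0. Then ∫_ℝ g(ξ) / |ξ − δ|^s dξ ≤ λ^{−s} ‖g‖_{L¹} + ‖g'‖_{L¹} · λ^{1−s} / (1−s). -/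
/-!
Since `g` vanishes at `±∞` in the mean, `2 g ξ = ∫_{-∞}^ξ g' - ∫_ξ^∞ g' ≤ ‖g'‖₁`; concretely, if
`2 g ξ > ‖g'‖₁` then `g a + g (2ξ - a)` would be bounded below by a positive constant on `(-∞, ξ]`,
contradicting integrability. Hence `‖g‖_∞ ≤ ‖g'‖₁ / 2`. Replacing `|ξ - δ|` by the smaller
`|ξ - Re δ|`, split the integral at distance `λ` from `Re δ`: far away the weight is at most
`λ^{-s}`, and nearby `g ≤ ‖g‖_∞` while `∫_{-λ}^{λ} |x|^{-s} dx = 2 λ^{1-s} / (1 - s)`.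
-/

open MeasureTheory Set

section SupBound

variable {g g' : ℝ → ℝ}

theorem two_mul_le_add_add_integral_abs (hg' : ∀ a b, IntervalIntegrable g' volume a b)
    (hac : ∀ a b, g b - g a = ∫ t in a..b, g' t) {a ξ b : ℝ} (ha : a ≤ ξ) (hb : ξ ≤ b) :
    2 * g ξ ≤ g a + g b + ∫ t in a..b, |g' t| := by
  have hleft : g ξ - g a ≤ ∫ t in a..ξ, |g' t| :=
    hac a ξ ▸ (le_abs_self _).trans (intervalIntegral.abs_integral_le_integral_abs ha)
  have hright : g ξ - g b ≤ ∫ t in ξ..b, |g' t| := by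
    rw [← neg_sub, hac ξ b]
    exact (neg_le_abs _).trans (intervalIntegral.abs_integral_le_integral_abs hb)
  rw [← intervalIntegral.integral_add_adjacent_intervals (hg' a ξ).abs (hg' ξ b).abs]
  linarith

theorem two_mul_le_integral_abs_deriv (hg : Integrable g) (hg' : Integrable g')
    (hac : ∀ a b, g b - g a = ∫ t in a..b, g' t) (ξ : ℝ) :
    2 * g ξ ≤ ∫ t, |g' t| := by
  by_contra! hlt
  set m := 2 * g ξ - ∫ t, |g' t|
  have hsym : Integrable fun a => g a + g (2 * ξ - a) :=
    hg.add ((integrable_comp_sub_left g (2 * ξ)).mpr hg)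
  have hIic : Iic ξ ⊆ {a | m ≤ g a + g (2 * ξ - a)} := fun a (ha : a ≤ ξ) => by
    have h2 := two_mul_le_add_add_integral_abs (fun _ _ => hg'.intervalIntegrable) hac ha
      (b := 2 * ξ - a) (by linarith)
    have hI : ∫ t in a..2 * ξ - a, |g' t| ≤ ∫ t, |g' t| := by
      rw [intervalIntegral.integral_of_le (by linarith)]
      exact setIntegral_le_integral hg'.abs (.of_forall fun t => abs_nonneg _)
    simp only [mem_ofPred_eq, m]
    linarith
  have := (measure_mono hIic).trans_lt (hsym.measure_ge_lt_top (sub_pos.mpr hlt))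
  simp at this

end SupBound

section Singularity

variable {t r : ℝ}

theorem intervalIntegrable_abs_rpow (ht : -1 < t) (a b : ℝ) :
    IntervalIntegrable (fun x => |x| ^ t) volume a b := by
  have hright {r : ℝ} (hr : 0 ≤ r) : IntervalIntegrable (fun x => |x| ^ t) volume 0 r :=
    (intervalIntegral.intervalIntegrable_rpow' ht).congr fun x hx => by
      rw [uIoc_of_le hr] at hx
      simp only [abs_of_pos hx.1]
  have hzero (r : ℝ) : IntervalIntegrable (fun x => |x| ^ t) volume 0 r := by
    rcases le_total 0 r with hr | hr
    · exact hright hr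
    · simpa only [abs_neg, neg_zero, neg_neg] using
        (IntervalIntegrable.iff_comp_neg enorm_ne_top).mp (hright (neg_nonneg.mpr hr))
  exact (hzero a).symm.trans (hzero b)

theorem integral_abs_rpow_zero_right (ht : -1 < t) (hr : 0 ≤ r) :
    ∫ x in 0..r, |x| ^ t = r ^ (t + 1) / (t + 1) := by
  rw [intervalIntegral.integral_congr (g := fun x => x ^ t) fun x hx => by
      rw [uIcc_of_le hr] at hx
      simp only [abs_of_nonneg hx.1],
    integral_rpow (Or.inl ht), Real.zero_rpow (by linarith), sub_zero]

theorem integral_abs_rpow_symm (ht : -1 < t) (hr : 0 ≤ r) :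
    ∫ x in -r..r, |x| ^ t = 2 * (r ^ (t + 1) / (t + 1)) := by
  have hneg : ∫ x in -r..0, |x| ^ t = ∫ x in 0..r, |x| ^ t := by
    simpa only [abs_neg, neg_zero] using
      (intervalIntegral.integral_comp_neg (a := 0) (b := r) fun x => |x| ^ t).symm
  rw [← intervalIntegral.integral_add_adjacent_intervals (intervalIntegrable_abs_rpow ht _ 0)
    (intervalIntegrable_abs_rpow ht 0 _), hneg, integral_abs_rpow_zero_right ht hr, two_mul]

theorem integrableOn_ball_abs_sub_rpow (ht : -1 < t) (c r : ℝ) :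
    IntegrableOn (fun x => |x - c| ^ t) (Metric.ball c r) := by
  have := ((intervalIntegrable_abs_rpow ht (-r) r).comp_sub_right c).def'
  rw [neg_add_eq_sub, add_comm] at this
  rw [Real.ball_eq_Ioo]
  exact this.mono_set (Ioo_subset_Ioc_self.trans Ioc_subset_uIoc)

theorem integral_ball_abs_sub_rpow (ht : -1 < t) (hr : 0 ≤ r) (c : ℝ) :
    ∫ x in Metric.ball c r, |x - c| ^ t = 2 * (r ^ (t + 1) / (t + 1)) := by
  rw [Real.ball_eq_Ioo, ← integral_Ioc_eq_integral_Ioo,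
    ← intervalIntegral.integral_of_le (by linarith),
    intervalIntegral.integral_comp_sub_right (fun x => |x| ^ t), sub_sub_cancel_left,
    add_sub_cancel_left, integral_abs_rpow_symm ht hr]

end Singularity

section WeightedBound

variable {s lam : ℝ}

theorem div_abs_sub_rpow_le {x c y M : ℝ} (hy : 0 ≤ y) (hyM : y ≤ M) (hs : 0 ≤ s)
    (hlam : 0 < lam) :
    y / |x - c| ^ s
      ≤ lam ^ (-s) * y + (Metric.ball c lam).indicator (fun x => M * |x - c| ^ (-s)) x := by
  rcases le_or_gt lam |x - c| with hfar | hnear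
  · have hM : 0 ≤ (Metric.ball c lam).indicator (fun x => M * |x - c| ^ (-s)) x :=
      indicator_nonneg (fun x _ => mul_nonneg (hy.trans hyM) (by positivity)) x
    calc y / |x - c| ^ s ≤ y / lam ^ s :=
          div_le_div_of_nonneg_left hy (by positivity) (Real.rpow_le_rpow hlam.le hfar hs)
      _ = lam ^ (-s) * y := by rw [Real.rpow_neg hlam.le, div_eq_inv_mul]
      _ ≤ _ := le_add_of_nonneg_right hM
  · have hmem : x ∈ Metric.ball c lam := by rwa [Metric.mem_ball, Real.dist_eq]
    rw [indicator_of_mem hmem, div_eq_mul_inv, ← Real.rpow_neg (abs_nonneg _)]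
    exact le_add_of_nonneg_of_le (by positivity) (mul_le_mul_of_nonneg_right hyM (by positivity))

theorem lintegral_div_abs_sub_rpow_le {g : ℝ → ℝ} {M : ℝ} (hg : Integrable g)
    (hg0 : ∀ t, 0 ≤ g t) (hgM : ∀ t, g t ≤ M) (hs0 : 0 ≤ s) (hs1 : s < 1) (hlam : 0 < lam)
    (c : ℝ) :
    ∫⁻ x, ENNReal.ofReal (g x / |x - c| ^ s)
      ≤ ENNReal.ofReal (lam ^ (-s) * (∫ t, g t) + M * (2 * (lam ^ (1 - s) / (1 - s)))) := by
  have hpt (x : ℝ) := div_abs_sub_rpow_le (c := c) (x := x) (hg0 x) (hgM x) hs0 hlam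
  have hnear : Integrable ((Metric.ball c lam).indicator fun x => M * |x - c| ^ (-s)) :=
    IntegrableOn.integrable_indicator
      ((integrableOn_ball_abs_sub_rpow (by linarith) c lam).const_mul M) measurableSet_ball
  have hsplit := (hg.const_mul (lam ^ (-s))).add hnear
  calc ∫⁻ x, ENNReal.ofReal (g x / |x - c| ^ s)
      ≤ ∫⁻ x, ENNReal.ofReal (lam ^ (-s) * g x +
          (Metric.ball c lam).indicator (fun x => M * |x - c| ^ (-s)) x) :=
        lintegral_mono fun x => ENNReal.ofReal_le_ofReal (hpt x)
    _ = ENNReal.ofReal (∫ x, lam ^ (-s) * g x +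
          (Metric.ball c lam).indicator (fun x => M * |x - c| ^ (-s)) x) :=
        (ofReal_integral_eq_lintegral_ofReal hsplit
          (.of_forall fun x => (div_nonneg (hg0 x) (by positivity)).trans (hpt x))).symm
    _ = _ := by
      rw [integral_add (hg.const_mul _) hnear, integral_const_mul,
        integral_indicator measurableSet_ball, integral_const_mul,
        integral_ball_abs_sub_rpow (by linarith) hlam.le, neg_add_eq_sub]

theorem lintegral_div_norm_sub_rpow_le_re {g : ℝ → ℝ} (hg0 : ∀ t, 0 ≤ g t) (hs : 0 ≤ s)
    (δ : ℂ) :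
    ∫⁻ x : ℝ, ENNReal.ofReal (g x / ‖(x : ℂ) - δ‖ ^ s)
      ≤ ∫⁻ x : ℝ, ENNReal.ofReal (g x / |x - δ.re| ^ s) := by
  refine lintegral_mono_ae ?_
  filter_upwards [compl_mem_ae_iff.mpr (measure_singleton δ.re)] with x hx
  have hre : |x - δ.re| ≤ ‖(x : ℂ) - δ‖ := by
    simpa using Complex.abs_re_le_norm ((x : ℂ) - δ)
  have hpos : 0 < |x - δ.re| := abs_pos.mpr (sub_ne_zero.mpr hx)
  exact ENNReal.ofReal_le_ofReal <|
    div_le_div_of_nonneg_left (hg0 x) (by positivity) (Real.rpow_le_rpow hpos.le hre hs)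

end WeightedBound

/-- **Weighted integral bound for `W^{1,1}` densities**
(second inequality in Eq. (4) of "Spectral properties of discrete alloy-type models").
For nonnegative, integrable `g : ℝ → ℝ` which is absolutely continuous with integrable
derivative `g'`, and for `s ∈ (0,1)`, `δ ∈ ℂ`, `λ > 0`:
`∫ g(ξ)/|ξ-δ|^s dξ ≤ λ^{-s} ‖g‖_{L¹} + ‖g'‖_{L¹} · λ^{1-s}/(1-s)`. -/
theorem weighted_integral_bound_W11
    (g g' : ℝ → ℝ) (hg_nonneg : ∀ t, 0 ≤ g t)
    (hg_int : Integrable g) (hg'_int : Integrable g')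
    (hac : ∀ a b : ℝ, g b - g a = ∫ t in a..b, g' t)
    (s : ℝ) (hs : s ∈ Set.Ioo (0 : ℝ) 1) (δ : ℂ) (lam : ℝ) (hlam : 0 < lam) :
    ∫⁻ ξ : ℝ, ENNReal.ofReal (g ξ / ‖(ξ : ℂ) - δ‖ ^ s)
      ≤ ENNReal.ofReal
          (lam ^ (-s) * (∫ t, g t) +
            (∫ t, |g' t|) * (lam ^ (1 - s) / (1 - s))) := by
  have hbound (t : ℝ) : g t ≤ (∫ t, |g' t|) / 2 := by
    linarith [two_mul_le_integral_abs_deriv hg_int hg'_int hac t]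
  calc ∫⁻ ξ : ℝ, ENNReal.ofReal (g ξ / ‖(ξ : ℂ) - δ‖ ^ s)
      ≤ ∫⁻ ξ : ℝ, ENNReal.ofReal (g ξ / |ξ - δ.re| ^ s) :=
        lintegral_div_norm_sub_rpow_le_re hg_nonneg hs.1.le δ
    _ ≤ _ := lintegral_div_abs_sub_rpow_le hg_int hg_nonneg hbound hs.1.le hs.2 hlam δ.re
    _ = _ := by congr 1; ring
end
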